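/- Let T, L, P > 0, n ∈ ℕ with n ≥ 1, and suppose (h,t,ρ) is a discretization of length n such that: each h_j equals 2^{−ℓ_j} T for some ℓ_j ∈ ℕ; ρ_j = 2LP h_j² for all j ∈ [1,n]; each t_j equals i_j h_j for some i_j ∈ ℕ (with the convention that this holds trivially for j = 0); and t = Σ₊h. Then for every k ∈ [0,n], the refined discretization ψ[h,t,ρ;k] again satisfies all four properties (with the node ρ_0 component of ψ[h,t,ρ;0] exempt from the coupling condition, which only concerns indices j ≥ 1). -/

import Mathlib

noncomputable section

/-- The local error term `𝓔_j(h,t,ρ)` of the Euler scheme error bound: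
`𝓔_0 = e^{LT} ρ_0/2` and `𝓔_j = e^{L(T-t_j)}(e^{L h_j}-1)(P h_j + ρ_j/2 + ρ_j/(2 L h_j))`. -/
def calE (T L P : ℝ) (h t ρ : ℕ → ℝ) (j : ℕ) : ℝ :=
  if j = 0 then Real.exp (L * T) * ρ 0 / 2
  else Real.exp (L * (T - t j)) * (Real.exp (L * h j) - 1) *
    (P * h j + ρ j / 2 + ρ j / (2 * L * h j))

/-- The error bound `E(h,t,ρ) = ∑_{j=0}^n 𝓔_j(h,t,ρ)` for a discretization of length `n`. -/
def Ebound (T L P : ℝ) (n : ℕ) (h t ρ : ℕ → ℝ) : ℝ :=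
  ∑ j ∈ Finset.range (n + 1), calE T L P h t ρ j

/-- The `h`-component of the subdivision rule `ψ[h,t,ρ;k]`: for `k = 0` the step
sizes are unchanged, for `k ∈ [1,n]` the entry `h_k` is replaced by the two
entries `h_k/2, h_k/2` and later entries are shifted. -/
def psiH (h : ℕ → ℝ) (k : ℕ) : ℕ → ℝ := fun j =>
  if k = 0 then h j
  else if j < k then h j
  else if j ≤ k + 1 then h k / 2
  else h (j - 1)

/-- The `t`-component of the subdivision rule `ψ[h,t,ρ;k]`: for `k = 0` the nodes
are unchanged, for `k ∈ [1,n]` the node `t_k - h_k/2` is inserted between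
`t_{k-1}` and `t_k`. -/
def psiT (h t : ℕ → ℝ) (k : ℕ) : ℕ → ℝ := fun j =>
  if k = 0 then t j
  else if j < k then t j
  else if j = k then t k - h k / 2
  else t (j - 1)

/-- The `ρ`-component of the subdivision rule `ψ[h,t,ρ;k]`: for `k = 0` the entry
`ρ_0` is replaced by `ρ_0/4`, for `k ∈ [1,n]` the entry `ρ_k` is replaced by the
two entries `ρ_k/4, ρ_k/4` and later entries are shifted. -/
def psiRho (ρ : ℕ → ℝ) (k : ℕ) : ℕ → ℝ := fun j =>
  if k = 0 then (if j = 0 then ρ 0 / 4 else ρ j)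
  else if j < k then ρ j
  else if j ≤ k + 1 then ρ k / 4
  else ρ (j - 1)

/-- The length of the discretization produced by `ψ[h,t,ρ;k]` from one of length `n`:
`n` if `k = 0`, and `n + 1` otherwise. -/
def newn (n k : ℕ) : ℕ := if k = 0 then n else n + 1

/-- `ΔE(h,t,ρ;k) = E(ψ[h,t,ρ;k]) - E(h,t,ρ)`. -/
def deltaE (T L P : ℝ) (n : ℕ) (h t ρ : ℕ → ℝ) (k : ℕ) : ℝ :=
  Ebound T L P (newn n k) (psiH h k) (psiT h t k) (psiRho ρ k) - Ebound T L P n h t ρ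

/-- The cost estimator `C(h,t,ρ) = ∑_{j=0}^{n-1} (v_R(t_j)/ρ_j^{d_R}) ·
(v_F(t_j) h_{j+1}^{d_F} / ρ_{j+1}^{d_F})`. -/
def costC (dR dF : ℕ) (vR vF : ℝ → ℝ) (n : ℕ) (h t ρ : ℕ → ℝ) : ℝ :=
  ∑ j ∈ Finset.range n,
    (vR (t j) / ρ j ^ dR) * (vF (t j) * h (j + 1) ^ dF / ρ (j + 1) ^ dF)

/-- `ΔC(h,t,ρ;k) = C(ψ[h,t,ρ;k]) - C(h,t,ρ)`. -/
def deltaC (dR dF : ℕ) (vR vF : ℝ → ℝ) (n : ℕ) (h t ρ : ℕ → ℝ) (k : ℕ) : ℝ :=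
  costC dR dF vR vF (newn n k) (psiH h k) (psiT h t k) (psiRho ρ k) -
    costC dR dF vR vF n h t ρ

/-! Each of the four properties survives ψ[h,t,ρ;k] for a local reason: the two new steps `h_k/2`
are again dyadic; the two new tolerances `ρ_k/4` equal `2LP(h_k/2)²`; if `t_k = i·h_k` then the
inserted node is `t_k - h_k/2 = (2i - 1)·(h_k/2)`, where `i ≥ 1` because `t_k > 0`, and the old node
is `t_k = 2i·(h_k/2)`; and the recursion `t_{j+1} = t_j + h_{j+1}` holds across the inserted node
because `h_k/2 + h_k/2 = h_k`. -/

open Finset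

section Subdivision

variable {h t ρ : ℕ → ℝ} {n k j : ℕ}

theorem newn_of_ne_zero (hk : k ≠ 0) : newn n k = n + 1 := if_neg hk

theorem psiH_zero (h : ℕ → ℝ) : psiH h 0 = h := rfl

theorem psiRho_zero_of_ne_zero (hj : j ≠ 0) : psiRho ρ 0 j = ρ j := if_neg hj

theorem psiH_of_lt (hj : j < k) : psiH h k j = h j := by
  simp [psiH, hj, Nat.ne_zero_of_lt hj]

theorem psiH_self (hk : k ≠ 0) : psiH h k k = h k / 2 := by
  simp [psiH, hk]

theorem psiH_succ_self (hk : k ≠ 0) : psiH h k (k + 1) = h k / 2 := by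
  simp [psiH, hk]

theorem psiH_succ_of_lt (hk : k ≠ 0) (hj : k < j) : psiH h k (j + 1) = h j := by
  simp [psiH, hk, show ¬j + 1 < k by omega, show ¬j ≤ k by omega]

theorem psiRho_of_lt (hj : j < k) : psiRho ρ k j = ρ j := by
  simp [psiRho, hj, Nat.ne_zero_of_lt hj]

theorem psiRho_self (hk : k ≠ 0) : psiRho ρ k k = ρ k / 4 := by
  simp [psiRho, hk]

theorem psiRho_succ_self (hk : k ≠ 0) : psiRho ρ k (k + 1) = ρ k / 4 := by
  simp [psiRho, hk]

theorem psiRho_succ_of_lt (hk : k ≠ 0) (hj : k < j) : psiRho ρ k (j + 1) = ρ j := by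
  simp [psiRho, hk, show ¬j + 1 < k by omega, show ¬j ≤ k by omega]

theorem psiT_of_lt (hj : j < k) : psiT h t k j = t j := by
  simp [psiT, hj, Nat.ne_zero_of_lt hj]

theorem psiT_self (hk : k ≠ 0) : psiT h t k k = t k - h k / 2 := by
  simp [psiT, hk]

theorem psiT_succ_of_le (hk : k ≠ 0) (hj : k ≤ j) : psiT h t k (j + 1) = t j := by
  simp [psiT, hk, show ¬j + 1 < k by omega, show j + 1 ≠ k by omega]

end Subdivision

theorem Nat.lt_or_eq_or_eq_succ_or_exists_succ (j k : ℕ) :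
    j < k ∨ j = k ∨ j = k + 1 ∨ ∃ m, k < m ∧ j = m + 1 := by
  rcases lt_or_ge j (k + 2) with hj | hj
  · omega
  · exact Or.inr <| Or.inr <| Or.inr ⟨j - 1, by omega, by omega⟩

theorem eq_sum_Icc_of_succ_eq_add {t h : ℕ → ℝ} {m : ℕ} (h0 : t 0 = 0)
    (hstep : ∀ j < m, t (j + 1) = t j + h (j + 1)) :
    ∀ j ≤ m, t j = ∑ i ∈ Icc 1 j, h i := by
  intro j hj
  induction j with
  | zero => simpa using h0
  | succ j ih =>
    rw [hstep j hj, ih (by omega), sum_Icc_succ_top (by omega)]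

theorem exists_half_eq_div_two_pow {T x : ℝ} (hx : ∃ ℓ : ℕ, x = T / 2 ^ ℓ) :
    ∃ ℓ : ℕ, x / 2 = T / 2 ^ ℓ := by
  obtain ⟨ℓ, rfl⟩ := hx
  exact ⟨ℓ + 1, by rw [pow_succ, div_div]⟩

section Preservation

variable {h t ρ : ℕ → ℝ} {n k : ℕ}

theorem psiH_mem_of_forall_mem {S : Set ℝ} (hS : ∀ x ∈ S, x / 2 ∈ S) (hk : k ≤ n)
    (hmem : ∀ j, 1 ≤ j → j ≤ n → h j ∈ S) :
    ∀ j, 1 ≤ j → j ≤ newn n k → psiH h k j ∈ S := by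
  intro j hj1 hjn
  rcases eq_or_ne k 0 with rfl | hk0
  · exact hmem j hj1 hjn
  rw [newn_of_ne_zero hk0] at hjn
  obtain hjk | rfl | rfl | ⟨m, hkm, rfl⟩ := Nat.lt_or_eq_or_eq_succ_or_exists_succ j k
  · rw [psiH_of_lt hjk]; exact hmem j hj1 (by omega)
  · rw [psiH_self hk0]; exact hS _ (hmem j hj1 hk)
  · rw [psiH_succ_self hk0]; exact hS _ (hmem k (by omega) hk)
  · rw [psiH_succ_of_lt hk0 hkm]; exact hmem m (by omega) (by omega)

theorem psiRho_eq_mul_psiH_sq {c : ℝ} (hk : k ≤ n)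
    (hcoup : ∀ j, 1 ≤ j → j ≤ n → ρ j = c * h j ^ 2) :
    ∀ j, 1 ≤ j → j ≤ newn n k → psiRho ρ k j = c * psiH h k j ^ 2 := by
  intro j hj1 hjn
  rcases eq_or_ne k 0 with rfl | hk0
  · rw [psiRho_zero_of_ne_zero (by omega), psiH_zero]; exact hcoup j hj1 hjn
  rw [newn_of_ne_zero hk0] at hjn
  obtain hjk | rfl | rfl | ⟨m, hkm, rfl⟩ := Nat.lt_or_eq_or_eq_succ_or_exists_succ j k
  · rw [psiRho_of_lt hjk, psiH_of_lt hjk]; exact hcoup j hj1 (by omega)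
  · rw [psiRho_self hk0, psiH_self hk0, hcoup j hj1 hk]; ring
  · rw [psiRho_succ_self hk0, psiH_succ_self hk0, hcoup k (by omega) hk]; ring
  · rw [psiRho_succ_of_lt hk0 hkm, psiH_succ_of_lt hk0 hkm]; exact hcoup m (by omega) (by omega)

theorem psiT_eq_nat_mul_psiH (hk : k ≤ n) (htpos : ∀ j, 1 ≤ j → j ≤ n → 0 < t j)
    (hnode : ∀ j, j ≤ n → ∃ i : ℕ, t j = i * h j) :
    ∀ j, j ≤ newn n k → ∃ i : ℕ, psiT h t k j = i * psiH h k j := by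
  intro j hjn
  rcases eq_or_ne k 0 with rfl | hk0
  · exact hnode j hjn
  rw [newn_of_ne_zero hk0] at hjn
  obtain hjk | rfl | rfl | ⟨m, hkm, rfl⟩ := Nat.lt_or_eq_or_eq_succ_or_exists_succ j k
  · rw [psiT_of_lt hjk, psiH_of_lt hjk]; exact hnode j (by omega)
  · obtain ⟨i, hi⟩ := hnode j hk
    obtain ⟨i, rfl⟩ : ∃ i', i = i' + 1 := by
      refine Nat.exists_eq_succ_of_ne_zero fun hi0 => ?_
      have := htpos j (by omega) hk
      simp [hi, hi0] at this
    refine ⟨2 * i + 1, ?_⟩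
    rw [psiT_self hk0, psiH_self hk0, hi]
    push_cast; ring
  · obtain ⟨i, hi⟩ := hnode k hk
    refine ⟨2 * i, ?_⟩
    rw [psiT_succ_of_le hk0 le_rfl, psiH_succ_self hk0, hi]
    push_cast; ring
  · rw [psiT_succ_of_le hk0 hkm.le, psiH_succ_of_lt hk0 hkm]; exact hnode m (by omega)

theorem psiT_eq_sum_Icc (hk : k ≤ n) (hcum : ∀ j, j ≤ n → t j = ∑ i ∈ Icc 1 j, h i) :
    ∀ j, j ≤ newn n k → psiT h t k j = ∑ i ∈ Icc 1 j, psiH h k i := by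
  rcases eq_or_ne k 0 with rfl | hk0
  · exact hcum
  have hstep : ∀ j < n, t (j + 1) = t j + h (j + 1) := fun j hj => by
    rw [hcum j hj.le, hcum (j + 1) hj, sum_Icc_succ_top (by omega)]
  rw [newn_of_ne_zero hk0]
  refine eq_sum_Icc_of_succ_eq_add ?_ fun j hj => ?_
  · rw [psiT_of_lt (Nat.pos_of_ne_zero hk0), hcum 0 (Nat.zero_le n)]; rfl
  rcases lt_trichotomy (j + 1) k with hjk | hjk | hjk
  · rw [psiT_of_lt hjk, psiT_of_lt (by omega), psiH_of_lt hjk]; exact hstep j (by omega)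
  · subst hjk
    rw [psiT_self hk0, psiT_of_lt (by omega), psiH_self hk0, hstep j hk]; ring
  obtain rfl | hkj := (Nat.lt_succ_iff.mp hjk).eq_or_lt
  · rw [psiT_succ_of_le hk0 le_rfl, psiT_self hk0, psiH_succ_self hk0]; ring
  obtain ⟨m, rfl⟩ : ∃ m, j = m + 1 := ⟨j - 1, by omega⟩
  rw [psiT_succ_of_le hk0 hkj.le, psiT_succ_of_le hk0 (by omega), psiH_succ_of_lt hk0 hkj]
  exact hstep m (by omega)

end Preservation

theorem stmt_9_general (T L P : ℝ) (n : ℕ) (h t ρ : ℕ → ℝ)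
    (hh : ∀ j, 1 ≤ j → j ≤ n → 0 < h j)
    (hdyadic : ∀ j, 1 ≤ j → j ≤ n → ∃ ℓ : ℕ, h j = T / 2 ^ ℓ)
    (hcoup : ∀ j, 1 ≤ j → j ≤ n → ρ j = 2 * L * P * (h j) ^ 2)
    (hnode : ∀ j, j ≤ n → ∃ i : ℕ, t j = (i : ℝ) * h j)
    (hcum : ∀ k, k ≤ n → t k = ∑ j ∈ Finset.Icc 1 k, h j) :
    ∀ k, k ≤ n →
      (∀ j, 1 ≤ j → j ≤ newn n k → ∃ ℓ : ℕ, psiH h k j = T / 2 ^ ℓ) ∧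
      (∀ j, 1 ≤ j → j ≤ newn n k → psiRho ρ k j = 2 * L * P * (psiH h k j) ^ 2) ∧
      (∀ j, j ≤ newn n k → ∃ i : ℕ, psiT h t k j = (i : ℝ) * psiH h k j) ∧
      (∀ j, j ≤ newn n k → psiT h t k j = ∑ i ∈ Finset.Icc 1 j, psiH h k i) := by
  have htpos : ∀ j, 1 ≤ j → j ≤ n → 0 < t j := fun j hj hjn => by
    rw [hcum j hjn]
    exact sum_pos (fun i hi => hh i (mem_Icc.mp hi).1 ((mem_Icc.mp hi).2.trans hjn))
      ⟨j, mem_Icc.mpr ⟨hj, le_rfl⟩⟩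
  intro k hk
  exact ⟨psiH_mem_of_forall_mem (S := {x | ∃ ℓ : ℕ, x = T / 2 ^ ℓ})
      (fun _ => exists_half_eq_div_two_pow) hk hdyadic,
    psiRho_eq_mul_psiH_sq hk hcoup,
    psiT_eq_nat_mul_psiH hk htpos hnode, psiT_eq_sum_Icc hk hcum⟩

theorem stmt_9 (T L P : ℝ) (hT : 0 < T) (hL : 0 < L) (hP : 0 < P)
    (n : ℕ) (hn : 1 ≤ n) (h t ρ : ℕ → ℝ)
    (hh : ∀ j, 1 ≤ j → j ≤ n → 0 < h j)
    (htnn : ∀ j, j ≤ n → 0 ≤ t j)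
    (hρ : ∀ j, j ≤ n → 0 < ρ j)
    (hdyadic : ∀ j, 1 ≤ j → j ≤ n → ∃ ℓ : ℕ, h j = T / 2 ^ ℓ)
    (hcoup : ∀ j, 1 ≤ j → j ≤ n → ρ j = 2 * L * P * (h j) ^ 2)
    (hnode : ∀ j, j ≤ n → ∃ i : ℕ, t j = (i : ℝ) * h j)
    (hcum : ∀ k, k ≤ n → t k = ∑ j ∈ Finset.Icc 1 k, h j) :
    ∀ k, k ≤ n →
      (∀ j, 1 ≤ j → j ≤ newn n k → ∃ ℓ : ℕ, psiH h k j = T / 2 ^ ℓ) ∧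
      (∀ j, 1 ≤ j → j ≤ newn n k → psiRho ρ k j = 2 * L * P * (psiH h k j) ^ 2) ∧
      (∀ j, j ≤ newn n k → ∃ i : ℕ, psiT h t k j = (i : ℝ) * psiH h k j) ∧
      (∀ j, j ≤ newn n k → psiT h t k j = ∑ i ∈ Finset.Icc 1 j, psiH h k i) :=
  stmt_9_general T L P n h t ρ hh hdyadic hcoup hnode hcum
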